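/- arXiv:1703.00779 — 11 statements merged into one kernel-verified Lean document; each statement's English description precedes it below -/
import Mathlib

section
/- Let N be a positive integer and let I_R and O_R (R = 1,…,N) be arbitrary sets. Suppose w : ∏_R O_R → ∏_R I_R is such that for every collection of local operations f = (f_R : I_R → O_R)_{R=1..N}, the composite map w ∘ f (sending i = (i_1,…,i_N) to w(f_1(i_1),…,f_N(i_N))) has at least one fixed point. Then for every such collection f, the fixed point of w ∘ f is unique. -/
/-- Uniqueness of fixed points for Boolean "process functions" on `Fin n`. -/
lemma finBoolUnique : ∀ (n : ℕ) (W : (Fin n → Bool) → (Fin n → Bool)),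
    (∀ e : Fin n → Bool → Bool, ∃ a, W (fun s => e s (a s)) = a) →
    ∀ a b, W a = a → W b = b → a = b := by
  intro n
  induction n with
  | zero =>
    intro W _ a b _ _
    funext s; exact s.elim0
  | succ n ih =>
    intro W hW a b ha hb
    by_contra hab
    obtain ⟨s₀, hs₀⟩ := Function.ne_iff.mp hab
    -- main claim: no process function on Fin (n+1) can have two fixed points
    -- differing at the last coordinate
    have claim : ∀ (W' : (Fin (n+1) → Bool) → Fin (n+1) → Bool),
        (∀ e : Fin (n+1) → Bool → Bool, ∃ c, W' (fun s => e s (c s)) = c) →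
        ∀ α β, W' α = α → W' β = β →
        α (Fin.last n) = false → β (Fin.last n) = true → False := by
      intro W' hW' α β hα hβ hαl hβl
      -- the restricted maps with last coordinate frozen to v
      have propWv : ∀ v : Bool, ∀ e : Fin n → Bool → Bool,
          ∃ a, (fun c => Fin.init (W' (Fin.snoc c v))) (fun s => e s (a s)) = a := by
        intro v e
        obtain ⟨c, hc⟩ := hW' (Fin.snoc e (fun _ => v) : Fin (n+1) → Bool → Bool)
        refine ⟨Fin.init c, ?_⟩
        have h1 : (Fin.snoc (fun s => e s (Fin.init c s)) v : Fin (n+1) → Bool)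
            = fun s => (Fin.snoc e (fun _ => v) : Fin (n+1) → Bool → Bool) s (c s) := by
          funext s
          refine Fin.lastCases ?_ ?_ s
          · simp
          · intro t; simp [Fin.init]
        show Fin.init (W' (Fin.snoc (fun s => e s (Fin.init c s)) v)) = Fin.init c
        rw [h1, hc]
      have fpα : (fun c => Fin.init (W' (Fin.snoc c false))) (Fin.init α) = Fin.init α := by
        show Fin.init (W' (Fin.snoc (Fin.init α) false)) = _
        rw [← hαl, Fin.snoc_init_self, hα]
      have fpβ : (fun c => Fin.init (W' (Fin.snoc c true))) (Fin.init β) = Fin.init β := by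
        show Fin.init (W' (Fin.snoc (Fin.init β) true)) = _
        rw [← hβl, Fin.snoc_init_self, hβ]
      -- the killer operation: negate the last coordinate
      obtain ⟨c, hc⟩ := hW' (Fin.snoc (fun _ => id) (fun x => !x) : Fin (n+1) → Bool → Bool)
      cases hlast : c (Fin.last n) with
      | false =>
        have h1 : (fun s => (Fin.snoc (fun _ => id) (fun x => !x) : Fin (n+1) → Bool → Bool) s (c s))
            = Fin.snoc (Fin.init c) true := by
          funext s
          refine Fin.lastCases ?_ ?_ s
          · simp [hlast]
          · intro t; simp [Fin.init]
        have hfp : (fun c => Fin.init (W' (Fin.snoc c true))) (Fin.init c) = Fin.init c := by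
          show Fin.init (W' (Fin.snoc (Fin.init c) true)) = _
          rw [← h1, hc]
        have heq : Fin.init c = Fin.init β := ih (fun c => Fin.init (W' (Fin.snoc c true))) (propWv true) _ _ hfp fpβ
        have hcβ : Fin.snoc (Fin.init c) true = β := by
          rw [heq, ← hβl, Fin.snoc_init_self]
        have hcb : c = β := by rw [← hc, h1, hcβ, hβ]
        rw [hcb, hβl] at hlast
        exact Bool.noConfusion hlast
      | true =>
        have h1 : (fun s => (Fin.snoc (fun _ => id) (fun x => !x) : Fin (n+1) → Bool → Bool) s (c s))
            = Fin.snoc (Fin.init c) false := by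
          funext s
          refine Fin.lastCases ?_ ?_ s
          · simp [hlast]
          · intro t; simp [Fin.init]
        have hfp : (fun c => Fin.init (W' (Fin.snoc c false))) (Fin.init c) = Fin.init c := by
          show Fin.init (W' (Fin.snoc (Fin.init c) false)) = _
          rw [← h1, hc]
        have heq : Fin.init c = Fin.init α := ih (fun c => Fin.init (W' (Fin.snoc c false))) (propWv false) _ _ hfp fpα
        have hcα : Fin.snoc (Fin.init c) false = α := by
          rw [heq, ← hαl, Fin.snoc_init_self]
        have hca : c = α := by rw [← hc, h1, hcα, hα]
        rw [hca, hαl] at hlast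
        exact Bool.noConfusion hlast
    -- conjugate by the swap moving s₀ to the last coordinate
    set π := Equiv.swap s₀ (Fin.last n) with hπ
    have hππ : ∀ s, π (π s) = s := fun s => Equiv.swap_apply_self _ _ s
    have propW' : ∀ e : Fin (n+1) → Bool → Bool,
        ∃ c, (fun (c : Fin (n+1) → Bool) s => W (fun t => c (π t)) (π s))
          (fun s => e s (c s)) = c := by
      intro e
      obtain ⟨d, hd⟩ := hW (fun t => e (π t))
      refine ⟨fun s => d (π s), ?_⟩
      funext s
      show W (fun t => e (π t) (d (π (π t)))) (π s) = d (π s)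
      have h2 : (fun t => e (π t) (d (π (π t)))) = fun t => e (π t) (d t) := by
        funext t; rw [hππ]
      rw [h2]
      exact congrFun hd (π s)
    have fpW' : ∀ x : Fin (n+1) → Bool, W x = x →
        (fun (c : Fin (n+1) → Bool) s => W (fun t => c (π t)) (π s)) (fun s => x (π s))
          = fun s => x (π s) := by
      intro x hx
      funext s
      show W (fun t => x (π (π t))) (π s) = x (π s)
      have h2 : (fun t => x (π (π t))) = x := by funext t; rw [hππ]
      rw [h2]
      exact congrFun hx (π s)
    have hπlast : π (Fin.last n) = s₀ := Equiv.swap_apply_right _ _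
    cases has : a s₀ with
    | false =>
      have hbs : b s₀ = true := by
        cases hbs : b s₀
        · exact absurd (has.trans hbs.symm) hs₀
        · rfl
      exact claim (fun c s => W (fun t => c (π t)) (π s)) propW'
        (fun s => a (π s)) (fun s => b (π s)) (fpW' a ha) (fpW' b hb)
        (by show a (π (Fin.last n)) = false; rw [hπlast]; exact has)
        (by show b (π (Fin.last n)) = true; rw [hπlast]; exact hbs)
    | true =>
      have hbs : b s₀ = false := by
        cases hbs : b s₀
        · rfl
        · exact absurd (has.trans hbs.symm) hs₀
      exact claim (fun c s => W (fun t => c (π t)) (π s)) propW'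
        (fun s => b (π s)) (fun s => a (π s)) (fpW' b hb) (fpW' a ha)
        (by show b (π (Fin.last n)) = false; rw [hπlast]; exact hbs)
        (by show a (π (Fin.last n)) = true; rw [hπlast]; exact has)

/-- Uniqueness of fixed points for Boolean process functions on a finite index type. -/
lemma boolUnique {ι : Type*} [Fintype ι] (W : (ι → Bool) → ι → Bool)
    (hW : ∀ e : ι → Bool → Bool, ∃ a, W (fun s => e s (a s)) = a)
    (a b : ι → Bool) (ha : W a = a) (hb : W b = b) : a = b := by
  set ε := Fintype.equivFin ι with hε
  have prop₂ : ∀ e : Fin (Fintype.card ι) → Bool → Bool,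
      ∃ c, (fun (c : Fin (Fintype.card ι) → Bool) s => W (fun t => c (ε t)) (ε.symm s))
        (fun s => e s (c s)) = c := by
    intro e
    obtain ⟨d, hd⟩ := hW (fun t => e (ε t))
    refine ⟨fun s => d (ε.symm s), ?_⟩
    funext s
    show W (fun t => e (ε t) (d (ε.symm (ε t)))) (ε.symm s) = d (ε.symm s)
    have h : (fun t => e (ε t) (d (ε.symm (ε t)))) = fun t => e (ε t) (d t) := by
      funext t; rw [Equiv.symm_apply_apply]
    rw [h]
    exact congrFun hd _
  have fp₂ : ∀ x : ι → Bool, W x = x →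
      (fun (c : Fin (Fintype.card ι) → Bool) s => W (fun t => c (ε t)) (ε.symm s))
        (fun s => x (ε.symm s)) = fun s => x (ε.symm s) := by
    intro x hx
    funext s
    show W (fun t => x (ε.symm (ε t))) (ε.symm s) = x (ε.symm s)
    have h : (fun t => x (ε.symm (ε t))) = x := by funext t; rw [Equiv.symm_apply_apply]
    rw [h]
    exact congrFun hx _
  have key := finBoolUnique _
    (fun (c : Fin (Fintype.card ι) → Bool) s => W (fun t => c (ε t)) (ε.symm s)) prop₂
    (fun s => a (ε.symm s)) (fun s => b (ε.symm s)) (fp₂ a ha) (fp₂ b hb)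
  funext t
  have h := congrFun key (ε t)
  simpa using h

/-- **Unique fixed points.** If `w : ∏ O_R → ∏ I_R` is such that for every collection of
local operations `f = (f_R : I_R → O_R)` the composite `w ∘ f` has at least one fixed
point, then for every such collection the fixed point is unique. -/
theorem unique_fixed_point {N : ℕ} (hN : 0 < N) (I O : Fin N → Type*)
    (w : (∀ R, O R) → (∀ R, I R))
    (hw : ∀ f : ∀ R, I R → O R, ∃ i : ∀ R, I R, w (fun R => f R (i R)) = i) :
    ∀ f : ∀ R, I R → O R, ∃! i : ∀ R, I R, w (fun R => f R (i R)) = i := by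
  classical
  intro f
  obtain ⟨i, hi⟩ := hw f
  refine ⟨i, hi, ?_⟩
  intro j hj
  by_contra hji
  -- the set of coordinates where the two fixed points differ
  let S := {R : Fin N // i R ≠ j R}
  -- the "mixing" map: choose between i and j coordinatewise
  let m : (S → Bool) → ∀ R, I R := fun a R =>
    if h : i R = j R then i R else (if a ⟨R, h⟩ then j R else i R)
  -- the induced Boolean process function
  let W : (S → Bool) → S → Bool := fun a s =>
    decide (w (fun R => f R (m a R)) s.1 = j s.1)
  have propW : ∀ e : S → Bool → Bool, ∃ a, W (fun s => e s (a s)) = a := by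
    intro e
    obtain ⟨k, hk⟩ := hw (fun R x =>
      f R (if h : i R = j R then i R
           else (if e ⟨R, h⟩ (decide (x = j R)) then j R else i R)))
    refine ⟨fun s => decide (k s.1 = j s.1), ?_⟩
    have hmg : (fun R => (fun R x =>
        f R (if h : i R = j R then i R
             else (if e ⟨R, h⟩ (decide (x = j R)) then j R else i R))) R (k R))
        = fun R => f R (m (fun s => e s (decide (k s.1 = j s.1))) R) := by
      funext R
      by_cases h : i R = j R
      · simp only [m, dif_pos h]
      · simp only [m, dif_neg h]
    rw [hmg] at hk
    funext s
    show decide (w (fun R => f R (m (fun s => e s (decide (k s.1 = j s.1))) R)) s.1 = j s.1)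
        = decide (k s.1 = j s.1)
    rw [hk]
  have hfp0 : W (fun _ => false) = fun _ => false := by
    have hm : m (fun _ => false) = i := by
      funext R
      by_cases h : i R = j R
      · simp only [m, dif_pos h]
      · simp only [m, dif_neg h, if_neg Bool.false_ne_true]
    funext s
    show decide (w (fun R => f R (m (fun _ => false) R)) s.1 = j s.1) = false
    rw [hm, hi]
    exact decide_eq_false s.2
  have hfp1 : W (fun _ => true) = fun _ => true := by
    have hm : m (fun _ => true) = j := by
      funext R
      by_cases h : i R = j R
      · simp only [m, dif_pos h]; exact h
      · simp [m, dif_neg h]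
    funext s
    show decide (w (fun R => f R (m (fun _ => true) R)) s.1 = j s.1) = true
    rw [hm, hj]
    exact decide_eq_true rfl
  obtain ⟨R, hR⟩ := Function.ne_iff.mp hji
  have := congrFun (boolUnique W propW (fun _ => false) (fun _ => true) hfp0 hfp1)
    ⟨R, Ne.symm hR⟩
  simp at this
end

section
/- Let N be a positive integer, let O_R (R = 1,…,N) be arbitrary sets, and let each I_R (R = 1,…,N) be an additive group. Suppose w : ∏_R O_R → ∏_R I_R is a process function. Then for every collection of local operations f = (f_R : I_R → O_R)_{R=1..N} and every e = (e_1,…,e_N) ∈ ∏_R I_R, there exists a unique o ∈ ∏_R O_R such that o_R = f_R(w_R(o) + e_R) for all R. Consequently the extended bijection w'(o,e) = ((w_R(o)+e_R)_R, o) is itself a process function on the enlarged collection of regions. -/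
universe u

/-- Extend a family defined away from `k` by a value at `k`. -/
private def extFn {ι : Type} [DecidableEq ι] {I : ι → Type u} (k : ι)
    (s : ∀ x : {y : ι // y ≠ k}, I x.1) (u : I k) : ∀ x, I x :=
  fun x => if h : x = k then h.symm ▸ u else s ⟨x, h⟩

private theorem extFn_self {ι : Type} [DecidableEq ι] {I : ι → Type u} {k : ι}
    (s : ∀ x : {y : ι // y ≠ k}, I x.1) (u : I k) : extFn k s u k = u := by
  simp [extFn]

private theorem extFn_ne {ι : Type} [DecidableEq ι] {I : ι → Type u} {k : ι}
    (s : ∀ x : {y : ι // y ≠ k}, I x.1) (u : I k) {x : ι} (hx : x ≠ k) :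
    extFn k s u x = s ⟨x, hx⟩ :=
  dif_neg hx

private theorem extFn_eq {ι : Type} [DecidableEq ι] {I : ι → Type u} {k : ι}
    {s : ∀ x : {y : ι // y ≠ k}, I x.1} {u : I k} {j : ∀ x, I x}
    (h : ∀ (x : ι) (hx : x ≠ k), s ⟨x, hx⟩ = j x) (hu : u = j k) :
    extFn k s u = j := by
  funext x
  by_cases hx : x = k
  · subst hx; rw [extFn_self, hu]
  · rw [extFn_ne _ _ hx, h x hx]

/-- One-region fact: if `T ∘ h` has a fixed point for every `h`, then fixed
points of `T` are unique. -/
private theorem one_region {α : Type*} (T : α → α)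
    (hT : ∀ h : α → α, ∃ t, T (h t) = t) {u v : α} (hu : T u = u) (hv : T v = v) :
    u = v := by
  classical
  by_contra huv
  obtain ⟨t, ht⟩ := hT (fun x => if x = u then v else u)
  by_cases h : t = u
  · rw [h, if_pos rfl, hv] at ht
    exact huv ht.symm
  · rw [if_neg h, hu] at ht
    exact h ht.symm

/-- Uniqueness of fixed points for process functions, by strong induction on the
number of regions. -/
private theorem ufix (n : ℕ) : ∀ (ι : Type) [Fintype ι] (I : ι → Type u)
    (W : (∀ x, I x) → ∀ x, I x),
    Fintype.card ι = n →
    (∀ g : ∀ x, I x → I x, ∃ i, W (fun x => g x (i x)) = i) →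
    ∀ a b : ∀ x, I x, W a = a → W b = b → a = b := by
  induction n using Nat.strongRecOn with
  | ind n IH =>
    intro ι _ I W hcard hW a b ha hb
    classical
    by_contra hab
    obtain ⟨k, hk⟩ := Function.ne_iff.mp hab
    -- the one-region "effective" dynamics of region `k`, given the other outputs `s`
    set T : (∀ x : {y : ι // y ≠ k}, I x.1) → I k → I k :=
      fun s u => W (extFn k s u) k with hTdef
    have proc1 : ∀ (s : ∀ x : {y : ι // y ≠ k}, I x.1) (h : I k → I k),
        ∃ t, T s (h t) = t := by
      intro s h
      obtain ⟨i, hi⟩ := hW (Function.update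
        (fun x (_ : I x) => extFn k s (a k) x) k h)
      refine ⟨i k, ?_⟩
      have hfe : (fun x => Function.update
          (fun x (_ : I x) => extFn k s (a k) x) k h x (i x))
          = extFn k s (h (i k)) := by
        funext x
        by_cases hx : x = k
        · subst hx
          rw [Function.update_self, extFn_self]
        · rw [Function.update_of_ne hx, extFn_ne _ _ hx, extFn_ne _ _ hx]
      rw [hfe] at hi
      exact congrFun hi k
    -- region k's local operation used in the reduction
    set gk : I k → I k := fun u => if u = a k then a k else b k with hgk
    have exF : ∀ s, ∃ t, T s (gk t) = t := fun s => proc1 s gk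
    set tf : (∀ x : {y : ι // y ≠ k}, I x.1) → I k := fun s => (exF s).choose with htfdef
    have htf : ∀ s, T s (gk (tf s)) = tf s := fun s => (exF s).choose_spec
    have uniq : ∀ s t, T s (gk t) = t → t = tf s := fun s t ht =>
      one_region (fun t => T s (gk t))
        (fun h => proc1 s (fun x => gk (h x))) ht (htf s)
    by_cases hD : ∀ x : {y : ι // y ≠ k}, a x.1 = b x.1
    · -- a and b differ only at k: direct one-region contradiction
      set sa : ∀ x : {y : ι // y ≠ k}, I x.1 := fun x => a x.1 with hsa
      have hea : extFn k sa (a k) = a := extFn_eq (fun _ _ => rfl) rfl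
      have heb : extFn k sa (b k) = b := extFn_eq (fun x hx => hD ⟨x, hx⟩) rfl
      have TA : T sa (a k) = a k := by
        show W (extFn k sa (a k)) k = a k
        rw [hea, ha]
      have TB : T sa (b k) = b k := by
        show W (extFn k sa (b k)) k = b k
        rw [heb, hb]
      obtain ⟨t, ht⟩ := proc1 sa (fun u => if u = a k then b k else a k)
      by_cases h : t = a k
      · rw [h, if_pos rfl, TB] at ht
        exact hk ht.symm
      · rw [if_neg h, TA] at ht
        exact h ht.symm
    · -- a and b also differ somewhere else: reduce to fewer regions
      push_neg at hD
      obtain ⟨k', hk'⟩ := hD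
      set W' : (∀ x : {y : ι // y ≠ k}, I x.1) → ∀ x : {y : ι // y ≠ k}, I x.1 :=
        fun s x => W (extFn k s (gk (tf s))) x.1 with hW'def
      have hcard' : Fintype.card {y : ι // y ≠ k} < n := by
        rw [← hcard]
        exact Fintype.card_subtype_lt (x := k) (by simp)
      have hWproc' : ∀ g : ∀ x : {y : ι // y ≠ k}, I x.1 → I x.1,
          ∃ s, W' (fun x => g x (s x)) = s := by
        intro g'
        obtain ⟨i, hi⟩ := hW (Function.update
          (fun x (u : I x) => if hx : x = k then u else g' ⟨x, hx⟩ u) k gk)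
        set s : ∀ x : {y : ι // y ≠ k}, I x.1 := fun x => g' x (i x.1) with hs
        have hfe : (fun x => Function.update
            (fun x (u : I x) => if hx : x = k then u else g' ⟨x, hx⟩ u) k gk x (i x))
            = extFn k s (gk (i k)) := by
          funext x
          by_cases hx : x = k
          · subst hx
            rw [Function.update_self, extFn_self]
          · rw [Function.update_of_ne hx, extFn_ne _ _ hx, dif_neg hx]
        rw [hfe] at hi
        have hik : i k = tf s := uniq s (i k) (congrFun hi k)
        refine ⟨fun x => i x.1, ?_⟩
        funext x
        show W (extFn k (fun x : {y : ι // y ≠ k} => g' x (i x.1)) (gk (tf (fun x : {y : ι // y ≠ k} => g' x (i x.1))))) x.1 = i x.1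
        rw [← hik]
        exact congrFun hi x.1
      have hak : gk (a k) = a k := if_pos rfl
      have ha' : W' (fun x : {y : ι // y ≠ k} => a x.1) = fun x : {y : ι // y ≠ k} => a x.1 := by
        have h1 : T (fun x : {y : ι // y ≠ k} => a x.1) (gk (a k)) = a k := by
          show W (extFn k (fun x : {y : ι // y ≠ k} => a x.1) (gk (a k))) k = a k
          rw [hak, extFn_eq (fun _ _ => rfl) rfl, ha]
        have h2 : a k = tf (fun x : {y : ι // y ≠ k} => a x.1) := uniq _ _ h1
        funext x
        show W (extFn k (fun x : {y : ι // y ≠ k} => a x.1) (gk (tf _))) x.1 = a x.1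
        rw [← h2, hak, extFn_eq (fun _ _ => rfl) rfl, ha]
      have hb' : W' (fun x : {y : ι // y ≠ k} => b x.1) = fun x : {y : ι // y ≠ k} => b x.1 := by
        have hbk : gk (b k) = b k := if_neg (fun h => hk h.symm)
        have h1 : T (fun x : {y : ι // y ≠ k} => b x.1) (gk (b k)) = b k := by
          show W (extFn k (fun x : {y : ι // y ≠ k} => b x.1) (gk (b k))) k = b k
          rw [hbk, extFn_eq (fun _ _ => rfl) rfl, hb]
        have h2 : b k = tf (fun x : {y : ι // y ≠ k} => b x.1) := uniq _ _ h1
        funext x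
        show W (extFn k (fun x : {y : ι // y ≠ k} => b x.1) (gk (tf _))) x.1 = b x.1
        rw [← h2, hbk]
        rw [extFn_eq (fun _ _ => rfl) rfl, hb]
      have := IH (Fintype.card {y : ι // y ≠ k}) hcard' {y : ι // y ≠ k}
        (fun x => I x.1) W' rfl hWproc' (fun x : {y : ι // y ≠ k} => a x.1) (fun x : {y : ι // y ≠ k} => b x.1) ha' hb'
      exact hk' (congrFun this k')

/-- If `w : ∏ O_R → ∏ I_R` is a process function (every collection of local operations
`f` gives a fixed point of `w ∘ f`), then for every collection of local operations `f`
and every source preparation `e ∈ ∏ I_R` there is a *unique* `o ∈ ∏ O_R` with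
`o_R = f_R (w_R(o) + e_R)` for all `R`; i.e. the extended bijection
`w'(o,e) = ((w_R(o)+e_R)_R, o)` is itself a process function on the enlarged
collection of regions. -/
theorem extended_map_process {N : ℕ} (hN : 0 < N) (I O : Fin N → Type*)
    [∀ R, AddGroup (I R)] (w : (∀ R, O R) → (∀ R, I R))
    (hw : ∀ f : ∀ R, I R → O R, ∃ i : ∀ R, I R, w (fun R => f R (i R)) = i) :
    ∀ (f : ∀ R, I R → O R) (e : ∀ R, I R),
      ∃! o : ∀ R, O R, ∀ R, o R = f R (w o R + e R) := by
  intro f e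
  -- shifted local operations
  set f' : ∀ R, I R → O R := fun R x => f R (x + e R) with hf'
  obtain ⟨i, hi⟩ := hw f'
  refine ⟨fun R => f' R (i R), ?_, ?_⟩
  · intro R
    show f' R (i R) = f R (w (fun R => f' R (i R)) R + e R)
    rw [hi]
  · intro o' ho'
    -- `w` composed with `f'` is a process function on the original regions
    set W : (∀ R, I R) → ∀ R, I R := fun j => w (fun R => f' R (j R)) with hW
    have hWproc : ∀ g : ∀ R, I R → I R, ∃ j, W (fun R => g R (j R)) = j :=
      fun g => hw (fun R x => f' R (g R x))
    have ho'' : o' = fun R => f' R (w o' R) := by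
      funext R; exact ho' R
    have hfix' : W (w o') = w o' := by
      show w (fun R => f' R (w o' R)) = w o'
      rw [← ho'']
    have hfix : W i = i := hi
    have hii : w o' = i :=
      ufix N (Fin N) (fun R => I R) W (Fintype.card_fin N) hWproc (w o') i hfix' hfix
    rw [ho'']
    funext R
    rw [hii]
end

section
/- Let N be a positive integer and let I_R, O_R (R = 1,…,N) be arbitrary sets. If w : ∏_R O_R → ∏_R I_R is a process function, then for each region R the component w_R : ∏_S O_S → I_R is constant over O_R; that is, w_R(o) = w_R(o') whenever o, o' ∈ ∏_S O_S agree on all coordinates S ≠ R. -/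
/-- If `w : ∏ O_R → ∏ I_R` is a process function, then each component
`w_R : ∏ O_S → I_R` is constant over `O_R`: it takes equal values on any two output
tuples that agree on all coordinates `S ≠ R`. -/
theorem component_constant_over_own_output {N : ℕ} (hN : 0 < N) (I O : Fin N → Type*)
    (w : (∀ R, O R) → (∀ R, I R))
    (hw : ∀ f : ∀ R, I R → O R, ∃ i : ∀ R, I R, w (fun R => f R (i R)) = i) :
    ∀ (R : Fin N) (o o' : ∀ S, O S), (∀ S, S ≠ R → o S = o' S) → w o R = w o' R := by
  intro R o o' hoo
  by_contra hne
  classical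
  -- local operations: at R, output o' R if input equals w o R, else o R; elsewhere constant o S
  set f : ∀ S, I S → O S := fun S =>
    if h : S = R then (fun i => if h ▸ i = w o R then h ▸ o' R else h ▸ o R)
    else fun _ => o S with hf
  obtain ⟨i, hi⟩ := hw f
  set x : ∀ S, O S := fun S => f S (i S) with hx
  have hxS : ∀ S, S ≠ R → x S = o S := by
    intro S hS
    simp [hx, hf, hS]
  have hxR : x R = if i R = w o R then o' R else o R := by
    simp [hx, hf]
  by_cases hc : i R = w o R
  · have hxo' : x = o' := by
      funext S
      by_cases hS : S = R
      · subst hS; rw [hxR, if_pos hc]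
      · rw [hxS S hS, hoo S hS]
    have : w o' R = i R := by rw [← hxo']; exact congrFun hi R
    exact hne (hc ▸ this.symm ▸ rfl)
  · have hxo : x = o := by
      funext S
      by_cases hS : S = R
      · subst hS; rw [hxR, if_neg hc]
      · exact hxS S hS
    have : w o R = i R := by rw [← hxo]; exact congrFun hi R
    exact hc this.symm
end

section
/- Let I and O be arbitrary sets and w : O → I. Then the map w ∘ f has a fixed point for every function f : I → O if and only if w is a constant function. -/
/-- **Single-region characterisation.** For `w : O → I`, the composite `w ∘ f` has a
fixed point for every local operation `f : I → O` if and only if `w` is a constant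
function. -/
theorem single_region_process_iff_constant {I O : Type*} (w : O → I) :
    (∀ f : I → O, ∃ i : I, w (f i) = i) ↔ ∃ c : I, ∀ o : O, w o = c := by
  constructor
  · intro h
    by_cases hO : Nonempty O
    · obtain ⟨o₀⟩ := hO
      refine ⟨w o₀, fun o => ?_⟩
      by_contra hne
      classical
      obtain ⟨i, hi⟩ := h (fun i => if i = w o₀ then o else o₀)
      by_cases hc : i = w o₀
      · simp [hc] at hi; exact hne (hi ▸ rfl)
      · simp [hc] at hi; exact hc hi.symm
    · by_cases hI : Nonempty I
      · exact ⟨hI.some, fun o => (hO ⟨o⟩).elim⟩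
      · obtain ⟨i, _⟩ := h (fun i => (hI ⟨i⟩).elim)
        exact (hI ⟨i⟩).elim
  · rintro ⟨c, hc⟩ f
    exact ⟨c, hc _⟩
end

section
/- Let N ≥ 2 and let I_R, O_R (R = 1,…,N) be arbitrary sets. Let w : ∏_R O_R → ∏_R I_R be such that each component w_S is constant over O_S (i.e., w_S(o) depends only on the coordinates o_T with T ≠ S). Fix a region R and a local operation f_R : I_R → O_R, and define the reduced function w^{f_R} : ∏_{S ≠ R} O_S → ∏_{S ≠ R} I_S by w^{f_R}_S(o_{∖R}) = w_S(o_{∖R}, f_R(w_R(o_{∖R}))). If i ∈ ∏_R I_R is a fixed point of w ∘ f for a collection of local operations f = (f_1,…,f_N), then the restriction i_{∖R} = (i_S)_{S ≠ R} is a fixed point of w^{f_R} ∘ f_{∖R}, where f_{∖R} = (f_S)_{S ≠ R}. -/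
/-- Extend a tuple of outputs for all regions other than `R` by a value `x : O R`
in the `R`-slot, producing a full output tuple. -/
def extendAt {N : ℕ} {O : Fin N → Type*} (R : Fin N)
    (o' : ∀ S, S ≠ R → O S) (x : O R) : ∀ S, O S :=
  fun S => if h : S = R then cast (congrArg O h).symm x else o' S h

/-- If each component of `w` is constant over its own region's output (so that the
reduced function `w^{f_R}` is well defined, the value `w_R(o_{∖R})` being computed from
any completion `x` of the partial output tuple) and `i` is a fixed point of `w ∘ f`,
then the restriction `i_{∖R}` is a fixed point of `w^{f_R} ∘ f_{∖R}`:
for all `S ≠ R`, `w_S(f_{∖R}(i_{∖R}), f_R(w_R(f_{∖R}(i_{∖R})))) = i_S`. -/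
theorem reduced_fixed_point {N : ℕ} (hN : 2 ≤ N) (I O : Fin N → Type*)
    (w : (∀ S, O S) → (∀ S, I S))
    (hconst : ∀ (S : Fin N) (o o' : ∀ T, O T),
      (∀ T, T ≠ S → o T = o' T) → w o S = w o' S)
    (R : Fin N) (f : ∀ S, I S → O S) (i : ∀ S, I S)
    (hfix : w (fun S => f S (i S)) = i) :
    ∀ (x : O R) (S : Fin N) (_ : S ≠ R),
      w (extendAt R (fun T _ => f T (i T))
          (f R (w (extendAt R (fun T _ => f T (i T)) x) R))) S = i S := by
  intro x S hS
  have hoff : ∀ (y : O R) (T : Fin N), T ≠ R →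
      extendAt R (fun T _ => f T (i T)) y T = f T (i T) := by
    intro y T hT
    simp [extendAt, hT]
  have hR : w (extendAt R (fun T _ => f T (i T)) x) R = i R := by
    have := hconst R (extendAt R (fun T _ => f T (i T)) x) (fun S => f S (i S))
      (fun T hT => hoff x T hT)
    rw [this, hfix]
  rw [hR]
  have := hconst S (extendAt R (fun T _ => f T (i T)) (f R (i R))) (fun S => f S (i S))
    (fun T hT => by
      by_cases hTR : T = R
      · subst hTR; simp [extendAt]
      · exact hoff _ T hTR)
  rw [this, hfix]
end

section
/- Let N ≥ 2 and let I_R, O_R (R = 1,…,N) be arbitrary sets. If w : ∏_R O_R → ∏_R I_R is a process function, then for every region R and every local operation f_R : I_R → O_R, the reduced function w^{f_R} : ∏_{S ≠ R} O_S → ∏_{S ≠ R} I_S is a process function on the remaining N−1 regions. -/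
/-- If `w : ∏ O_S → ∏ I_S` is a process function, then for every region `R` and every
local operation `f_R : I R → O R`, the reduced function
`w^{f_R}_S(o_{∖R}) = w_S(o_{∖R}, f_R(w_R(o_{∖R})))` is a process function on the
remaining `N − 1` regions: for every collection `g` of local operations on the regions
other than `R` there is a fixed point `i'` of `w^{f_R} ∘ g`.  (The `R`-slot of the full
output tuple carries the self-consistent value `x = f_R(w_R(o_{∖R}))`.) -/
theorem reduced_is_process {N : ℕ} (hN : 2 ≤ N) (I O : Fin N → Type*)
    (w : (∀ S, O S) → (∀ S, I S))
    (hw : ∀ f : ∀ S, I S → O S, ∃ i : ∀ S, I S, w (fun S => f S (i S)) = i)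
    (R : Fin N) (fR : I R → O R) :
    ∀ g : ∀ S, S ≠ R → (I S → O S),
      ∃ i' : ∀ S, S ≠ R → I S, ∃ x : O R,
        x = fR (w (extendAt R (fun S h => g S h (i' S h)) x) R) ∧
        ∀ (S : Fin N) (h : S ≠ R),
          w (extendAt R (fun S h => g S h (i' S h)) x) S = i' S h := by
  intro g
  set f : ∀ S, I S → O S := fun S =>
    if h : S = R then
      fun iS => cast (congrArg O h).symm (fR (cast (congrArg I h) iS))
    else g S h with hf
  obtain ⟨i, hi⟩ := hw f
  refine ⟨fun S _ => i S, fR (i R), ?_⟩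
  have key : extendAt R (fun S _ => g S ‹S ≠ R› (i S)) (fR (i R)) =
      fun S => f S (i S) := by
    funext S
    simp only [extendAt, hf]
    by_cases h : S = R
    · subst h; simp
    · simp [h]
  rw [key, hi]
  exact ⟨rfl, fun S h => rfl⟩
end

section
/- Let N ≥ 2 and let I_R, O_R (R = 1,…,N) be arbitrary sets. Let w : ∏_R O_R → ∏_R I_R be such that each component w_S is constant over O_S. If there exists a region R such that for every local operation f_R : I_R → O_R the reduced function w^{f_R} is a process function on the remaining N−1 regions, then w is a process function. -/
section extendAt

variable {N : ℕ} {O : Fin N → Type*} {R : Fin N} (o' : ∀ S, S ≠ R → O S) (x : O R)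

@[simp]
theorem extendAt_self : extendAt R o' x R = x := by
  simp [extendAt]

theorem extendAt_of_ne {S : Fin N} (h : S ≠ R) : extendAt R o' x S = o' S h := by
  simp [extendAt, h]

end extendAt

theorem process_of_reduced_process_general {N : ℕ} (I O : Fin N → Type*)
    (w : (∀ S, O S) → (∀ S, I S))
    (R : Fin N)
    (hred : ∀ fR : I R → O R, ∀ g : ∀ S, S ≠ R → (I S → O S),
      ∃ i' : ∀ S, S ≠ R → I S, ∃ x : O R,
        x = fR (w (extendAt R (fun S h => g S h (i' S h)) x) R) ∧
        ∀ (S : Fin N) (h : S ≠ R),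
          w (extendAt R (fun S h => g S h (i' S h)) x) S = i' S h) :
    ∀ f : ∀ S, I S → O S, ∃ i : ∀ S, I S, w (fun S => f S (i S)) = i := by
  intro f
  obtain ⟨i', x, hx, hfix⟩ := hred (f R) (fun S _ => f S)
  set o := extendAt R (fun S h => f S (i' S h)) x
  have hreproduce : (fun S => f S (w o S)) = o := by
    funext S
    by_cases h : S = R
    · subst h
      rw [← hx]
      exact (extendAt_self _ _).symm
    · rw [hfix S h]
      exact (extendAt_of_ne (fun S h => f S (i' S h)) x h).symm
  exact ⟨w o, by rw [hreproduce]⟩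

/-- Let each component of `w` be constant over its own region's output.  If there is a
region `R` such that for every local operation `f_R : I R → O R` the reduced function
`w^{f_R}_S(o_{∖R}) = w_S(o_{∖R}, f_R(w_R(o_{∖R})))` is a process function on the
remaining `N − 1` regions (for every collection `g` of local operations on the other
regions there is a fixed point `i'`, the `R`-slot of the full output tuple carrying the
self-consistent value `x = f_R(w_R(o_{∖R}))`), then `w` is a process function. -/
theorem process_of_reduced_process {N : ℕ} (hN : 2 ≤ N) (I O : Fin N → Type*)
    (w : (∀ S, O S) → (∀ S, I S))
    (hconst : ∀ (S : Fin N) (o o' : ∀ T, O T),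
      (∀ T, T ≠ S → o T = o' T) → w o S = w o' S)
    (R : Fin N)
    (hred : ∀ fR : I R → O R, ∀ g : ∀ S, S ≠ R → (I S → O S),
      ∃ i' : ∀ S, S ≠ R → I S, ∃ x : O R,
        x = fR (w (extendAt R (fun S h => g S h (i' S h)) x) R) ∧
        ∀ (S : Fin N) (h : S ≠ R),
          w (extendAt R (fun S h => g S h (i' S h)) x) S = i' S h) :
    ∀ f : ∀ S, I S → O S, ∃ i : ∀ S, I S, w (fun S => f S (i S)) = i :=
  process_of_reduced_process_general I O w R hred
end

section
/- Let A, B, X, Y be arbitrary sets and let u : Y → A, v : X → B. If the pair (u, v) is a bipartite process function, then at least one of u, v is a constant function. -/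
/-- A pair of functions `(u : Y → A, v : X → B)` is a bipartite process function if for
every pair of local operations `fR : A → X`, `fS : B → Y` the map
`(a,b) ↦ (u(fS(b)), v(fR(a)))` has a fixed point. -/
def IsBipartiteProcess {A B X Y : Type*} (u : Y → A) (v : X → B) : Prop :=
  ∀ (fR : A → X) (fS : B → Y), ∃ p : A × B, u (fS p.2) = p.1 ∧ v (fR p.1) = p.2

/-- If `(u, v)` is a bipartite process function, then at least one of `u`, `v` is a
constant function (one-way signaling). -/
theorem bipartite_process_one_way {A B X Y : Type*} (u : Y → A) (v : X → B)
    (h : IsBipartiteProcess u v) :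
    (∀ y y' : Y, u y = u y') ∨ (∀ x x' : X, v x = v x') := by
  by_contra hc
  push_neg at hc
  obtain ⟨⟨y₁, y₂, hu⟩, ⟨x₁, x₂, hv⟩⟩ := hc
  classical
  obtain ⟨⟨a, b⟩, ha, hb⟩ := h (fun a => if a = u y₁ then x₁ else x₂)
    (fun b => if b = v x₁ then y₂ else y₁)
  simp only at ha hb
  by_cases hA : a = u y₁
  · rw [if_pos hA] at hb
    rw [← hb, if_pos rfl] at ha
    exact hu (ha.trans hA).symm
  · rw [if_neg hA] at hb
    rw [← hb, if_neg (fun e => hv e.symm)] at ha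
    exact hA ha.symm
end

section
/- Let A, B, X, Y be arbitrary sets and let u : Y → A (with Y possibly empty) and v : X → B. If for every function g : B → Y the composite u ∘ g ∘ v : X → A is a constant function, then u is constant or v is constant. -/
/-- If for every function `g : B → Y` the composite `u ∘ g ∘ v : X → A` is constant
(`h : X → A` being constant meaning `h x = h x'` for all `x, x'`), then `u` is constant
or `v` is constant. -/
theorem constant_composite_dichotomy {A B X Y : Type*} (u : Y → A) (v : X → B)
    (h : ∀ g : B → Y, ∀ x x' : X, u (g (v x)) = u (g (v x'))) :
    (∀ y y' : Y, u y = u y') ∨ (∀ x x' : X, v x = v x') := by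
  by_contra hc
  push_neg at hc
  obtain ⟨⟨y₀, y₁, hu⟩, x, x', hv⟩ := hc
  classical
  have := h (fun b => if b = v x then y₀ else y₁) x x'
  simp [hv.symm] at this
  exact hu this
end

section
/- Define Θ : ℝ → ℝ by Θ(t) = 1 if t > 0 and Θ(t) = 0 if t ≤ 0. For all functions f_R, f_S, f_T : ℝ → ℝ there exists a unique triple (a, b, c) ∈ ℝ³ such that a = Θ(−f_S(b))·Θ(f_T(c)), b = Θ(−f_T(c))·Θ(f_R(a)), and c = Θ(−f_R(a))·Θ(f_S(b)). Equivalently, the map w : ℝ³ → ℝ³, w(x,y,z) = (Θ(−y)Θ(z), Θ(−z)Θ(x), Θ(−x)Θ(y)), is a tripartite process function with a unique fixed point for every choice of local operations. -/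
/-!
Each factor `Θ (-u) * Θ v` is the indicator of `u < 0 < v`, so two cyclically adjacent outputs
cannot both be nonzero: `b ≠ 0` needs `fR a > 0` and `c ≠ 0` needs `fR a < 0`. Hence in
`a = Θ(-fS b) Θ(fT c)` one of `b, c` vanishes; if `b ≠ 0` then `fT c = fT 0 < 0`, if `c ≠ 0` then
`fS b = fS 0 > 0`, and either way `a = Θ(-fS 0) Θ(fT 0)`. The same argument shows that this
point, the image of `(0, 0, 0)` under one round of the process, is itself a fixed point.
-/

/-- The Heaviside step function: `Θ t = 1` for `t > 0` and `Θ t = 0` for `t ≤ 0`. -/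
noncomputable def Θ (t : ℝ) : ℝ := if 0 < t then 1 else 0

noncomputable def gate (u v : ℝ) : ℝ := Θ (-u) * Θ v

lemma gate_eq_zero_of_nonneg {u : ℝ} (hu : 0 ≤ u) (v : ℝ) : gate u v = 0 := by
  simp [gate, Θ, hu]

lemma gate_eq_zero_of_nonpos (u : ℝ) {v : ℝ} (hv : v ≤ 0) : gate u v = 0 := by
  simp [gate, Θ, hv]

lemma gate_ne_zero_iff {u v : ℝ} : gate u v ≠ 0 ↔ u < 0 ∧ 0 < v := by
  by_cases hu : u < 0 <;> by_cases hv : 0 < v <;> simp [gate, Θ, hu, hv]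

lemma gate_eq_zero_or_gate_eq_zero (u v w : ℝ) : gate u v = 0 ∨ gate v w = 0 := by
  rcases le_or_gt v 0 with hv | hv
  · exact .inl (gate_eq_zero_of_nonpos u hv)
  · exact .inr (gate_eq_zero_of_nonneg hv.le w)

lemma gate_apply_eq_gate_apply_zero (u v : ℝ → ℝ) {b c : ℝ} (hbc : b = 0 ∨ c = 0)
    (hb : b ≠ 0 → v c < 0) (hc : c ≠ 0 → 0 < u b) : gate (u b) (v c) = gate (u 0) (v 0) := by
  rcases hbc with rfl | rfl
  · rcases eq_or_ne c 0 with rfl | hc0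
    · rfl
    · have hu := (hc hc0).le
      rw [gate_eq_zero_of_nonneg hu, gate_eq_zero_of_nonneg hu]
  · rcases eq_or_ne b 0 with rfl | hb0
    · rfl
    · have hv := (hb hb0).le
      rw [gate_eq_zero_of_nonpos _ hv, gate_eq_zero_of_nonpos _ hv]

def IsFixedPoint (fR fS fT : ℝ → ℝ) (a b c : ℝ) : Prop :=
  a = gate (fS b) (fT c) ∧ b = gate (fT c) (fR a) ∧ c = gate (fR a) (fS b)

section

variable {fR fS fT : ℝ → ℝ}

lemma IsFixedPoint.rotate {a b c : ℝ} (h : IsFixedPoint fR fS fT a b c) :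
    IsFixedPoint fS fT fR b c a :=
  ⟨h.2.1, h.2.2, h.1⟩

lemma IsFixedPoint.fst_eq {a b c : ℝ} (h : IsFixedPoint fR fS fT a b c) :
    a = gate (fS 0) (fT 0) := by
  obtain ⟨ha, hb, hc⟩ := h
  rw [ha]
  apply gate_apply_eq_gate_apply_zero
  · have hbc := gate_eq_zero_or_gate_eq_zero (fT c) (fR a) (fS b)
    rwa [← hb, ← hc] at hbc
  · exact fun hb0 ↦ (gate_ne_zero_iff.mp (hb ▸ hb0)).1
  · exact fun hc0 ↦ (gate_ne_zero_iff.mp (hc ▸ hc0)).2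

lemma IsFixedPoint.eq_gate_zero {a b c : ℝ} (h : IsFixedPoint fR fS fT a b c) :
    a = gate (fS 0) (fT 0) ∧ b = gate (fT 0) (fR 0) ∧ c = gate (fR 0) (fS 0) :=
  ⟨h.fst_eq, h.rotate.fst_eq, h.rotate.rotate.fst_eq⟩

variable (fR fS fT)

lemma gate_zero_eq_gate_apply_gate_zero :
    gate (fS 0) (fT 0) = gate (fS (gate (fT 0) (fR 0))) (fT (gate (fR 0) (fS 0))) := by
  have hBC := gate_eq_zero_or_gate_eq_zero (fT 0) (fR 0) (fS 0)
  refine (gate_apply_eq_gate_apply_zero fS fT hBC (fun hB ↦ ?_) (fun hC ↦ ?_)).symm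
  · rw [hBC.resolve_left hB]
    exact (gate_ne_zero_iff.mp hB).1
  · rw [hBC.resolve_right hC]
    exact (gate_ne_zero_iff.mp hC).2

lemma isFixedPoint_gate_zero :
    IsFixedPoint fR fS fT (gate (fS 0) (fT 0)) (gate (fT 0) (fR 0)) (gate (fR 0) (fS 0)) :=
  ⟨gate_zero_eq_gate_apply_gate_zero fR fS fT, gate_zero_eq_gate_apply_gate_zero fS fT fR,
    gate_zero_eq_gate_apply_gate_zero fT fR fS⟩

end

/-- The map `w(x,y,z) = (Θ(−y)Θ(z), Θ(−z)Θ(x), Θ(−x)Θ(y))` is a tripartite process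
function with a unique fixed point for every choice of local operations: for all
`f_R, f_S, f_T : ℝ → ℝ` there is a unique `(a,b,c) ∈ ℝ³` with
`a = Θ(−f_S(b))Θ(f_T(c))`, `b = Θ(−f_T(c))Θ(f_R(a))`, `c = Θ(−f_R(a))Θ(f_S(b))`. -/
theorem heaviside_process_unique_fixed_point (fR fS fT : ℝ → ℝ) :
    ∃! p : ℝ × ℝ × ℝ,
      p.1 = Θ (-(fS p.2.1)) * Θ (fT p.2.2) ∧
      p.2.1 = Θ (-(fT p.2.2)) * Θ (fR p.1) ∧
      p.2.2 = Θ (-(fR p.1)) * Θ (fS p.2.1) := by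
  refine ⟨(gate (fS 0) (fT 0), gate (fT 0) (fR 0), gate (fR 0) (fS 0)),
    isFixedPoint_gate_zero fR fS fT, ?_⟩
  rintro ⟨a, b, c⟩ h
  obtain ⟨rfl, rfl, rfl⟩ := IsFixedPoint.eq_gate_zero h
  rfl
end

section
/- Define Θ : ℝ → ℝ by Θ(t) = 1 if t > 0 and Θ(t) = 0 if t ≤ 0. For all functions f_R, f_S, f_T : ℝ → ℝ and all (e₀, e₁, e₂) ∈ ℝ³, there exists a unique triple (x, y, z) ∈ ℝ³ such that x = f_R(Θ(−y)Θ(z) + e₀), y = f_S(Θ(−z)Θ(x) + e₁), and z = f_T(Θ(−x)Θ(y) + e₂). -/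
/-!
The input `Θ(−y)Θ(z)` of a region is `1` exactly when `y < 0 < z`, so no two of the three inputs
can be `1` at once. Consequently, in a consistent assignment the input of each region is the one
it would get if the other two regions both received input `0`: writing `A, B, C` for the local
operations with the source's shifts absorbed, the input of `R` is `Θ(−B 0)Θ(C 0)`. This pins down
`x`, and by cyclic symmetry `y` and `z`; conversely, the triple so determined is consistent.
-/

lemma Θ_neg_mul_Θ_eq_zero {y z : ℝ} (h : ¬(y < 0 ∧ 0 < z)) : Θ (-y) * Θ z = 0 := by
  by_cases hy : y < 0
  · have hz : ¬0 < z := fun hz => h ⟨hy, hz⟩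
    simp [Θ, hz]
  · simp [Θ, hy]

def IsConsistent (A B C : ℝ → ℝ) (p : ℝ × ℝ × ℝ) : Prop :=
  p.1 = A (Θ (-p.2.1) * Θ p.2.2) ∧
  p.2.1 = B (Θ (-p.2.2) * Θ p.1) ∧
  p.2.2 = C (Θ (-p.1) * Θ p.2.1)

namespace IsConsistent

variable {A B C : ℝ → ℝ} {x y z : ℝ}

lemma rotate (h : IsConsistent A B C (x, y, z)) : IsConsistent B C A (y, z, x) :=
  ⟨h.2.1, h.2.2, h.1⟩

lemma input_eq (h : IsConsistent A B C (x, y, z)) :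
    Θ (-y) * Θ z = Θ (-(B 0)) * Θ (C 0) := by
  obtain ⟨-, hy, hz⟩ := h
  dsimp only at hy hz
  by_cases hR : y < 0 ∧ 0 < z
  · have hy0 : y = B 0 := by
      rw [hy, Θ_neg_mul_Θ_eq_zero fun hS => (hS.1.trans hR.2).false]
    have hz0 : z = C 0 := by
      rw [hz, Θ_neg_mul_Θ_eq_zero fun hT => (hR.1.trans hT.2).false]
    rw [← hy0, ← hz0]
  · rw [Θ_neg_mul_Θ_eq_zero hR, Θ_neg_mul_Θ_eq_zero]
    rintro ⟨hB, hC⟩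
    by_cases hS : z < 0 ∧ 0 < x
    · have hz0 : z = C 0 := by
        rw [hz, Θ_neg_mul_Θ_eq_zero fun hT => (hT.1.trans hS.2).false]
      exact (hS.1.trans (hz0 ▸ hC)).false
    · have hy0 : y = B 0 := by rw [hy, Θ_neg_mul_Θ_eq_zero hS]
      have hz0 : z = C 0 := by
        rw [hz, Θ_neg_mul_Θ_eq_zero fun hT => (hT.2.trans (hy0 ▸ hB)).false]
      exact hR ⟨hy0 ▸ hB, hz0 ▸ hC⟩

lemma fst_eq (h : IsConsistent A B C (x, y, z)) : x = A (Θ (-(B 0)) * Θ (C 0)) :=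
  h.1.trans (congrArg A h.input_eq)

end IsConsistent

lemma input_of_zero_input_outputs (A B C : ℝ → ℝ) :
    Θ (-(B (Θ (-(C 0)) * Θ (A 0)))) * Θ (C (Θ (-(A 0)) * Θ (B 0))) =
      Θ (-(B 0)) * Θ (C 0) := by
  by_cases hR : B 0 < 0 ∧ 0 < C 0
  · rw [Θ_neg_mul_Θ_eq_zero fun hS => (hS.1.trans hR.2).false,
      Θ_neg_mul_Θ_eq_zero fun hT => (hR.1.trans hT.2).false]
  by_cases hS : C 0 < 0 ∧ 0 < A 0
  · rw [Θ_neg_mul_Θ_eq_zero fun hT => (hT.1.trans hS.2).false, Θ_neg_mul_Θ_eq_zero hR,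
      Θ_neg_mul_Θ_eq_zero fun h => (h.2.trans hS.1).false]
  by_cases hT : A 0 < 0 ∧ 0 < B 0
  · rw [Θ_neg_mul_Θ_eq_zero fun hS => (hS.2.trans hT.1).false, Θ_neg_mul_Θ_eq_zero hR,
      Θ_neg_mul_Θ_eq_zero fun h => (h.1.trans hT.2).false]
  rw [Θ_neg_mul_Θ_eq_zero hS, Θ_neg_mul_Θ_eq_zero hT]

lemma isConsistent_of_zero_inputs (A B C : ℝ → ℝ) :
    IsConsistent A B C
      (A (Θ (-(B 0)) * Θ (C 0)), B (Θ (-(C 0)) * Θ (A 0)), C (Θ (-(A 0)) * Θ (B 0))) :=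
  ⟨congrArg A (input_of_zero_input_outputs A B C).symm,
    congrArg B (input_of_zero_input_outputs B C A).symm,
    congrArg C (input_of_zero_input_outputs C A B).symm⟩

lemma existsUnique_isConsistent (A B C : ℝ → ℝ) : ∃! p, IsConsistent A B C p :=
  ⟨_, isConsistent_of_zero_inputs A B C, fun ⟨_, _, _⟩ h =>
    Prod.ext h.fst_eq (Prod.ext h.rotate.fst_eq h.rotate.rotate.fst_eq)⟩

/-- The reversible extension of the Heaviside process is itself a process function:
for all local operations `f_R, f_S, f_T : ℝ → ℝ` and every source preparation
`(e₀,e₁,e₂) ∈ ℝ³` there is a unique triple `(x,y,z) ∈ ℝ³` with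
`x = f_R(Θ(−y)Θ(z)+e₀)`, `y = f_S(Θ(−z)Θ(x)+e₁)`, `z = f_T(Θ(−x)Θ(y)+e₂)`. -/
theorem heaviside_extension_process (fR fS fT : ℝ → ℝ) (e₀ e₁ e₂ : ℝ) :
    ∃! p : ℝ × ℝ × ℝ,
      p.1 = fR (Θ (-p.2.1) * Θ p.2.2 + e₀) ∧
      p.2.1 = fS (Θ (-p.2.2) * Θ p.1 + e₁) ∧
      p.2.2 = fT (Θ (-p.1) * Θ p.2.1 + e₂) :=
  existsUnique_isConsistent (fR <| · + e₀) (fS <| · + e₁) (fT <| · + e₂)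
end
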